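/- Under auto-calibration of μ̂(X) for Y (with continuous distribution of μ̂(X) and Y non-deterministic), the machine-learning Gini index equals G^eco_{μ̂(X)} divided by (2∫₀¹ CAP_{Y,Y}(α) dα − 1), where G^eco_{μ̂(X)} = 1 − 2∫₀¹ L_{μ̂(X)}(F⁻¹_{μ̂(X)}(α)) dα; in particular the denominator does not depend on μ̂. -/

import Mathlib

open MeasureTheory ProbabilityTheory Filter Set Topology

/-!
Auto-calibration says that `Y` and `μ̂(X)` have the same integral over every event of the form
`{μ̂(X) > t}`. Hence the CAP of `μ̂(X)` at level `α` is the share of `μ̂(X)` above its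
`(1 - α)`-quantile, `CAP(α) = 1 - L(F⁻¹(1 - α))`. Integrating over `α ∈ (0, 1)` and substituting
`α ↦ 1 - α` gives `∫ CAP = 1 - ∫ L ∘ F⁻¹ = (1 + G^eco) / 2`, so the numerator of `G^ML` is
`G^eco / 2`. Integrability of `L ∘ F⁻¹` on `(0, 1)` holds because it is monotone and bounded.
-/

section Lorenz

variable {Ω : Type*} [MeasurableSpace Ω] {P : Measure Ω}

lemma integral_mul_ite_eq_setIntegral (f : Ω → ℝ) (p : Ω → Prop) [DecidablePred p]
    (hp : MeasurableSet {ω | p ω}) :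
    ∫ ω, f ω * (if p ω then (1 : ℝ) else 0) ∂P = ∫ ω in {ω | p ω}, f ω ∂P := by
  rw [← integral_indicator hp]
  congr 1 with ω
  by_cases h : p ω <;> simp [h]

/-- Parametrized by the threshold `t`, as `L_{μ̂(X)}(t)` in the paper, not by a level `α`. -/
noncomputable def lorenz (P : Measure Ω) (M : Ω → ℝ) (t : ℝ) : ℝ :=
  (∫ ω in {ω | M ω ≤ t}, M ω ∂P) / ∫ ω, M ω ∂P

variable {M : Ω → ℝ}

lemma lorenz_nonneg (hM : 0 ≤ᵐ[P] M) (t : ℝ) : 0 ≤ lorenz P M t :=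
  div_nonneg (setIntegral_nonneg_of_ae hM) (integral_nonneg_of_ae hM)

lemma lorenz_le_one (hMi : Integrable M P) (hM : 0 ≤ᵐ[P] M) (t : ℝ) : lorenz P M t ≤ 1 :=
  div_le_one_of_le₀ (setIntegral_le_integral hMi hM) (integral_nonneg_of_ae hM)

lemma monotone_lorenz (hMi : Integrable M P) (hM : 0 ≤ᵐ[P] M) : Monotone (lorenz P M) :=
  fun _ _ hab => div_le_div_of_nonneg_right
    (setIntegral_mono_set hMi.integrableOn (ae_restrict_of_ae hM)
      (Eventually.of_forall fun _ (h : M _ ≤ _) => h.trans hab))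
    (integral_nonneg_of_ae hM)

end Lorenz

section AutoCalibration

variable {Ω : Type*} {m m₀ : MeasurableSpace Ω} {P : Measure Ω} [IsFiniteMeasure P] {Y M : Ω → ℝ}

lemma setIntegral_eq_of_condExp_ae_eq (hm : m ≤ m₀) (hY : Integrable Y P)
    (hYM : P[Y | m] =ᵐ[P] M) {s : Set Ω} (hs : MeasurableSet[m] s) :
    ∫ ω in s, M ω ∂P = ∫ ω in s, Y ω ∂P := by
  rw [← setIntegral_condExp hm hY hs]
  exact setIntegral_congr_ae (hm s hs) (hYM.mono fun _ h _ => h.symm)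

lemma integral_mul_ite_lt_div_eq_one_sub_lorenz (hM : Measurable M) (hY : Integrable Y P)
    (hEY : ∫ ω, Y ω ∂P ≠ 0) (hauto : P[Y | MeasurableSpace.comap M Real.measurableSpace] =ᵐ[P] M)
    (t : ℝ) :
    (∫ ω, Y ω * (if t < M ω then (1 : ℝ) else 0) ∂P) / ∫ ω, Y ω ∂P = 1 - lorenz P M t := by
  have hm := hM.comap_le
  have hs : MeasurableSet[MeasurableSpace.comap M Real.measurableSpace] {ω | t < M ω} :=
    ⟨Ioi t, measurableSet_Ioi, rfl⟩
  have hEM : ∫ ω, M ω ∂P = ∫ ω, Y ω ∂P := by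
    rw [← integral_congr_ae hauto, integral_condExp hm]
  have hsplit : (∫ ω in {ω | M ω ≤ t}, M ω ∂P) + ∫ ω in {ω | t < M ω}, M ω ∂P = ∫ ω, M ω ∂P := by
    simpa only [compl_ofPred, not_le] using
      integral_add_compl (s := {ω | M ω ≤ t}) (hM measurableSet_Iic)
        (integrable_condExp.congr hauto)
  rw [integral_mul_ite_eq_setIntegral _ _ (hm _ hs),
    ← setIntegral_eq_of_condExp_ae_eq hm hY hauto hs, lorenz, hEM]
  field_simp
  linarith

end AutoCalibration

noncomputable def quantile (F : ℝ → ℝ) (α : ℝ) : ℝ := sInf {t | α ≤ F t}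

lemma monotoneOn_quantile {F : ℝ → ℝ} (h0 : Tendsto F atBot (𝓝 0))
    (h1 : Tendsto F atTop (𝓝 1)) : MonotoneOn (quantile F) (Ioo 0 1) := by
  intro a ha b hb hab
  obtain ⟨T, hT⟩ := (h0.eventually (eventually_lt_nhds ha.1)).exists_forall_of_atBot
  obtain ⟨u, hu⟩ := (h1.eventually (eventually_ge_nhds hb.2)).exists
  refine csInf_le_csInf ⟨T, fun t (ht : a ≤ F t) => ?_⟩ ⟨u, hu⟩ fun t (ht : b ≤ F t) => hab.trans ht
  by_contra! h
  exact (hT t h.le).not_ge ht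

lemma MonotoneOn.integrableOn_of_norm_le {f : ℝ → ℝ} {s : Set ℝ} (hf : MonotoneOn f s)
    (hs : MeasurableSet s) (hs' : volume s < ⊤) {C : ℝ} (hC : ∀ x ∈ s, ‖f x‖ ≤ C) :
    IntegrableOn f s :=
  .of_bound hs' (aemeasurable_restrict_of_monotoneOn hs hf).aestronglyMeasurable C
    ((ae_restrict_iff' hs).2 (ae_of_all _ hC))

lemma integral_Ioo_one_sub_comp_one_sub {g : ℝ → ℝ} (hg : IntegrableOn g (Ioo 0 1)) :
    ∫ α in Ioo (0 : ℝ) 1, (1 - g (1 - α)) = 1 - ∫ α in Ioo (0 : ℝ) 1, g α := by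
  have hreflect : ∫ α in Ioo (0 : ℝ) 1, (1 - g (1 - α)) = ∫ α in Ioo (0 : ℝ) 1, (1 - g α) := by
    simp only [← integral_Ioc_eq_integral_Ioo, ← intervalIntegral.integral_of_le zero_le_one,
      intervalIntegral.integral_comp_sub_left (fun β => 1 - g β) 1, sub_self, sub_zero]
  rw [hreflect, integral_sub (integrableOn_const (C := (1 : ℝ)) (by simp)) hg]
  simp

lemma integrableOn_lorenz_comp_quantile {Ω : Type*} [MeasurableSpace Ω] {P : Measure Ω}
    {M : Ω → ℝ} (hMi : Integrable M P) (hM : 0 ≤ᵐ[P] M) {F : ℝ → ℝ}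
    (h0 : Tendsto F atBot (𝓝 0)) (h1 : Tendsto F atTop (𝓝 1)) :
    IntegrableOn (fun α => lorenz P M (quantile F α)) (Ioo 0 1) :=
  ((monotone_lorenz hMi hM).comp_monotoneOn (monotoneOn_quantile h0 h1)).integrableOn_of_norm_le
    measurableSet_Ioo (by simp) (C := 1) fun _ _ =>
      (Real.norm_of_nonneg (lorenz_nonneg hM _)).trans_le (lorenz_le_one hMi hM _)

theorem Gini_ML_eq_Gini_eco_div_general
    {Ω : Type*} [MeasurableSpace Ω] (P : Measure Ω) [IsProbabilityMeasure P]
    (M Y : Ω → ℝ) (hM : Measurable M) (hY : Integrable Y P)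
    (hYpos : ∀ ω, 0 ≤ Y ω) (hEY : 0 < ∫ ω, Y ω ∂P)
    (hauto : P[Y | MeasurableSpace.comap M Real.measurableSpace] =ᵐ[P] M)
    -- distribution function and quantile function of μ̂(X):
    (F : ℝ → ℝ) (hF : ∀ t, F t = (P {ω | M ω ≤ t}).toReal)
    (Finv : ℝ → ℝ) (hFinv : ∀ α, Finv α = sInf {t : ℝ | α ≤ F t})
    -- CAP of μ̂(X) and of Y itself:
    (CAP CAPYY : ℝ → ℝ)
    (hCAP : ∀ α, CAP α =
      (∫ ω, Y ω * (if Finv (1 - α) < M ω then (1 : ℝ) else 0) ∂P) / ∫ ω, Y ω ∂P)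
    -- Lorenz curve of μ̂(X):
    (L : ℝ → ℝ)
    (hL : ∀ t, L t = (∫ ω, M ω * (if M ω ≤ t then (1 : ℝ) else 0) ∂P) / ∫ ω, M ω ∂P)
    -- the two Gini indices:
    (GML Geco : ℝ)
    (hGML : GML = ((∫ α in Set.Ioo (0 : ℝ) 1, CAP α) - 1 / 2) /
      ((∫ α in Set.Ioo (0 : ℝ) 1, CAPYY α) - 1 / 2))
    (hGeco : Geco = 1 - 2 * ∫ α in Set.Ioo (0 : ℝ) 1, L (Finv α)) :
    GML = Geco / (2 * (∫ α in Set.Ioo (0 : ℝ) 1, CAPYY α) - 1) := by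
  have hMi : Integrable M P := integrable_condExp.congr hauto
  have hMnn : 0 ≤ᵐ[P] M := (condExp_nonneg (ae_of_all _ hYpos)).trans_eq hauto
  have hL' : L = lorenz P M := funext fun t => by
    rw [hL, integral_mul_ite_eq_setIntegral M (M · ≤ t) (hM measurableSet_Iic), lorenz]
  have : IsProbabilityMeasure (P.map M) := Measure.isProbabilityMeasure_map hM.aemeasurable
  have hF' : F = cdf (P.map M) := funext fun t => by
    rw [hF, cdf_eq_real, map_measureReal_apply hM measurableSet_Iic]; rfl
  have hCAP' : ∀ α, CAP α = 1 - L (Finv (1 - α)) := fun α => by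
    rw [hCAP, hL', integral_mul_ite_lt_div_eq_one_sub_lorenz hM hY hEY.ne' hauto]
  have hintCAP : ∫ α in Ioo (0 : ℝ) 1, CAP α = 1 - ∫ α in Ioo (0 : ℝ) 1, L (Finv α) := by
    simp_rw [hCAP']
    refine integral_Ioo_one_sub_comp_one_sub (g := fun β => L (Finv β)) ?_
    simp only [hL', show Finv = quantile F from funext hFinv, hF']
    exact integrableOn_lorenz_comp_quantile hMi hMnn (tendsto_cdf_atBot _) (tendsto_cdf_atTop _)
  rw [hGML, hGeco, hintCAP]
  set I := ∫ α in Ioo (0 : ℝ) 1, L (Finv α)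
  set c := ∫ α in Ioo (0 : ℝ) 1, CAPYY α
  calc (1 - I - 1 / 2) / (c - 1 / 2) = ((1 - 2 * I) / 2) / ((2 * c - 1) / 2) := by
        congr 1 <;> ring
    _ = (1 - 2 * I) / (2 * c - 1) := div_div_div_cancel_right₀ two_ne_zero _ _

/-- Under auto-calibration of `μ̂(X)` for `Y` (with continuous distributions and `Y`
non-deterministic), the ML Gini index equals `G^eco_{μ̂(X)}` divided by
`2∫₀¹ CAP_{Y,Y}(α) dα − 1`, where `G^eco = 1 − 2∫₀¹ L(F⁻¹(α)) dα`. -/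
theorem Gini_ML_eq_Gini_eco_div
    {Ω : Type*} [MeasurableSpace Ω] (P : Measure Ω) [IsProbabilityMeasure P]
    (M Y : Ω → ℝ) (hM : Measurable M) (hYm : Measurable Y) (hY : Integrable Y P)
    (hYpos : ∀ ω, 0 ≤ Y ω) (hEY : 0 < ∫ ω, Y ω ∂P)
    (hYnondet : ¬ ∃ c : ℝ, Y =ᵐ[P] fun _ => c)
    (hauto : P[Y | MeasurableSpace.comap M Real.measurableSpace] =ᵐ[P] M)
    -- distribution function and quantile function of μ̂(X):
    (F : ℝ → ℝ) (hF : ∀ t, F t = (P {ω | M ω ≤ t}).toReal) (hcont : Continuous F)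
    (Finv : ℝ → ℝ) (hFinv : ∀ α, Finv α = sInf {t : ℝ | α ≤ F t})
    -- distribution function and quantile function of Y:
    (FY : ℝ → ℝ) (hFY : ∀ t, FY t = (P {ω | Y ω ≤ t}).toReal) (hcontY : Continuous FY)
    (FYinv : ℝ → ℝ) (hFYinv : ∀ α, FYinv α = sInf {t : ℝ | α ≤ FY t})
    -- CAP of μ̂(X) and of Y itself:
    (CAP CAPYY : ℝ → ℝ)
    (hCAP : ∀ α, CAP α =
      (∫ ω, Y ω * (if Finv (1 - α) < M ω then (1 : ℝ) else 0) ∂P) / ∫ ω, Y ω ∂P)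
    (hCAPYY : ∀ α, CAPYY α =
      (∫ ω, Y ω * (if FYinv (1 - α) < Y ω then (1 : ℝ) else 0) ∂P) / ∫ ω, Y ω ∂P)
    -- Lorenz curve of μ̂(X):
    (L : ℝ → ℝ)
    (hL : ∀ t, L t = (∫ ω, M ω * (if M ω ≤ t then (1 : ℝ) else 0) ∂P) / ∫ ω, M ω ∂P)
    -- the two Gini indices:
    (GML Geco : ℝ)
    (hGML : GML = ((∫ α in Set.Ioo (0 : ℝ) 1, CAP α) - 1 / 2) /
      ((∫ α in Set.Ioo (0 : ℝ) 1, CAPYY α) - 1 / 2))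
    (hGeco : Geco = 1 - 2 * ∫ α in Set.Ioo (0 : ℝ) 1, L (Finv α)) :
    GML = Geco / (2 * (∫ α in Set.Ioo (0 : ℝ) 1, CAPYY α) - 1) :=
  Gini_ML_eq_Gini_eco_div_general P M Y hM hY hYpos hEY hauto F hF Finv hFinv CAP CAPYY hCAP L hL
    GML Geco hGML hGeco
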